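/- Let M be a positive integer and h > 0. Let ρ be a grid function on {0,…,M} with ρ₀ = ρ_M = 0 and let Q be any grid function on {0,…,M}, such that ρᵢ = −(h²/12)·δₓ²ρᵢ + Qᵢ for 1 ≤ i ≤ M−1. Then ‖ρ‖² ≤ (9/4)·‖Q‖². -/
import Mathlib


/-- The second difference quotient `δₓ²vᵢ = (v_{i+1} - 2vᵢ + v_{i-1})/h²`. -/
noncomputable def dx2 (h : ℝ) (v : ℕ → ℝ) (i : ℕ) : ℝ :=
  (v (i + 1) - 2 * v i + v (i - 1)) / h ^ 2

/-- Initial-level estimate: if `ρᵢ = -(h²/12)δₓ²ρᵢ + Qᵢ` for `1 ≤ i ≤ M-1` and `ρ`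
vanishes at the endpoints, then `‖ρ‖² ≤ (9/4)‖Q‖²`. -/
theorem stmt_14 (M : ℕ) (hM : 0 < M) (h : ℝ) (hh : 0 < h)
    (ρ Q : ℕ → ℝ) (hρ0 : ρ 0 = 0) (hρM : ρ M = 0)
    (hrel : ∀ i, 1 ≤ i → i ≤ M - 1 → ρ i = -(h ^ 2 / 12) * dx2 h ρ i + Q i) :
    h * ∑ i ∈ Finset.Icc 1 (M - 1), (ρ i) ^ 2
      ≤ 9 / 4 * (h * ∑ i ∈ Finset.Icc 1 (M - 1), (Q i) ^ 2) := by
  rcases Nat.lt_or_ge M 2 with hM2 | hM2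
  · interval_cases M
    simp
  have hne : h ≠ 0 := ne_of_gt hh
  set I : Finset ℕ := Finset.Icc 1 (M - 1) with hIdef
  have hQ : ∀ i ∈ I, Q i = (5/6) * ρ i + (1/12) * (ρ (i+1) + ρ (i-1)) := by
    intro i hi
    simp only [hIdef, Finset.mem_Icc] at hi
    have hq := hrel i hi.1 hi.2
    rw [dx2] at hq
    have key : -(h^2/12) * ((ρ (i+1) - 2 * ρ i + ρ (i-1))/h^2)
        = -(ρ (i+1) - 2 * ρ i + ρ (i-1))/12 := by
      field_simp
    rw [key] at hq
    linarith
  set S : ℝ := ∑ i ∈ I, (ρ i) ^ 2 with hSdef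
  set T : ℝ := ∑ i ∈ I, (Q i) ^ 2 with hTdef
  set P : ℝ := ∑ i ∈ I, ρ i * Q i with hPdef
  have hS0 : 0 ≤ S := Finset.sum_nonneg fun i _ => sq_nonneg _
  have hT0 : 0 ≤ T := Finset.sum_nonneg fun i _ => sq_nonneg _
  -- shifted sums
  have hM1 : M - 1 + 1 = M := Nat.succ_pred_eq_of_pos hM
  have hshift1 : ∑ i ∈ I, (ρ (i+1))^2 ≤ S := by
    have e : Finset.Icc 2 M = Finset.map (addRightEmbedding 1) (Finset.Icc 1 (M-1)) := by
      rw [Finset.map_add_right_Icc]; congr 1 <;> omega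
    have hmap : ∑ i ∈ I, (ρ (i+1))^2 = ∑ j ∈ Finset.Icc 2 M, (ρ j)^2 := by
      rw [hIdef, e, Finset.sum_map]
      simp [addRightEmbedding]
    rw [hmap]
    have : Finset.Icc 2 M = Finset.Icc 2 (M - 1 + 1) := by rw [hM1]
    rw [this, Finset.sum_Icc_succ_top (by omega), hM1, hρM]
    have hsub : Finset.Icc 2 (M-1) ⊆ I := by
      rw [hIdef]; exact Finset.Icc_subset_Icc_left (by omega)
    have := Finset.sum_le_sum_of_subset_of_nonneg hsub
      (fun i _ _ => sq_nonneg (ρ i))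
    simpa using this
  have hshift2 : ∑ i ∈ I, (ρ (i-1))^2 ≤ S := by
    have hM2' : 0 + 1 = 1 ∧ M - 2 + 1 = M - 1 := ⟨rfl, by omega⟩
    have e2 : Finset.Icc 1 (M-1) = Finset.map (addRightEmbedding 1) (Finset.Icc 0 (M-2)) := by
      rw [Finset.map_add_right_Icc]; congr 1 <;> omega
    have hmap : ∑ i ∈ I, (ρ (i-1))^2 = ∑ j ∈ Finset.Icc 0 (M-2), (ρ j)^2 := by
      rw [hIdef, e2, Finset.sum_map]
      simp [addRightEmbedding]
    rw [hmap]
    have h0 : Finset.Icc 0 (M-2) = insert 0 (Finset.Icc 1 (M-2)) := by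
      ext j; simp [Finset.mem_Icc, Finset.mem_insert]; omega
    rw [h0, Finset.sum_insert (by simp), hρ0]
    have hsub : Finset.Icc 1 (M-2) ⊆ I := by
      rw [hIdef]; exact Finset.Icc_subset_Icc_right (by omega)
    have := Finset.sum_le_sum_of_subset_of_nonneg hsub
      (fun i _ _ => sq_nonneg (ρ i))
    simpa using this
  -- pointwise lower bound for ρᵢQᵢ
  have hptwise : ∀ i ∈ I, (3/4)*(ρ i)^2 - (1/24)*((ρ (i+1))^2 + (ρ (i-1))^2)
      ≤ ρ i * Q i := by
    intro i hi
    rw [hQ i hi]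
    nlinarith [sq_nonneg (ρ i + ρ (i+1)), sq_nonneg (ρ i + ρ (i-1))]
  have hPlow : (2/3) * S ≤ P := by
    have hsum : ∑ i ∈ I, ((3/4)*(ρ i)^2 - (1/24)*((ρ (i+1))^2 + (ρ (i-1))^2)) ≤ P :=
      Finset.sum_le_sum hptwise
    have hexp : ∑ i ∈ I, ((3/4)*(ρ i)^2 - (1/24)*((ρ (i+1))^2 + (ρ (i-1))^2))
        = (3/4)*S - (1/24)*((∑ i ∈ I, (ρ (i+1))^2) + (∑ i ∈ I, (ρ (i-1))^2)) := by
      rw [hSdef]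
      simp only [Finset.sum_sub_distrib, Finset.sum_add_distrib, ← Finset.mul_sum]
    rw [hexp] at hsum
    nlinarith
  have hCS : P^2 ≤ S * T := Finset.sum_mul_sq_le_sq_mul_sq I ρ Q
  have hmain : S ≤ 9/4 * T := by
    rcases eq_or_lt_of_le hS0 with hS | hS
    · nlinarith
    · nlinarith [mul_pos hS hS]
  nlinarith
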